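/- Cascading and visible choice: let C₁ : X×Y₁ → ℝ and C₂ : X×Y₂ → ℝ be compatible channels, D₁ : Y₁×Z₁ → ℝ, D₂ : Y₂×Z₂ → ℝ be channels, and p ∈ [0,1]. Then (C₁D₁) ⊞_p (C₂D₂) = (C₁ ⊞_p C₂) D^⊞, where D^⊞ : (Y₁ ⊔ Y₂)×(Z₁ ⊔ Z₂) → ℝ is defined by D^⊞((y,i),(z,j)) = D₁(y,z) if i = j = 1; = D₂(y,z) if i = j = 2; and = 0 otherwise. -/

import Mathlib

open Finset

/-- A channel with input set `X` and output set `Y`: entries are nonnegative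
and each row sums to `1`. -/
def IsChannel {X Y : Type*} [Fintype Y] (C : X → Y → ℝ) : Prop :=
  (∀ x y, 0 ≤ C x y) ∧ ∀ x, ∑ y, C x y = 1

/-- A channel with input set `X` whose output set is the finset `S` of a common
ambient type `Ω`: entries are nonnegative, each row sums to `1` over `S`, and
entries vanish outside `S`. -/
def IsChannelOn {X Ω : Type*} (S : Finset Ω) (C : X → Ω → ℝ) : Prop :=
  (∀ x y, 0 ≤ C x y) ∧ (∀ x, ∑ y ∈ S, C x y = 1) ∧ ∀ x y, y ∉ S → C x y = 0

/-- Parallel composition `C₁ ∥ C₂`. -/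
def par {X Y₁ Y₂ : Type*} (C₁ : X → Y₁ → ℝ) (C₂ : X → Y₂ → ℝ) : X → Y₁ × Y₂ → ℝ :=
  fun x y => C₁ x y.1 * C₂ x y.2

/-- Visible choice `C₁ ⊞_p C₂`, on the disjoint union of the output sets. -/
def vis {X Y₁ Y₂ : Type*} (p : ℝ) (C₁ : X → Y₁ → ℝ) (C₂ : X → Y₂ → ℝ) : X → Y₁ ⊕ Y₂ → ℝ :=
  fun x => Sum.elim (fun y => p * C₁ x y) (fun y => (1 - p) * C₂ x y)

/-- Hidden choice `C₁ ⊕_p C₂` for channels whose output sets lie in a common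
ambient type (pointwise convex combination; this agrees with the case analysis
on `Y₁ ∩ Y₂`, `Y₁ \ Y₂`, `Y₂ \ Y₁` since channels vanish outside their output sets). -/
def hid {X Ω : Type*} (p : ℝ) (C₁ C₂ : X → Ω → ℝ) : X → Ω → ℝ :=
  fun x y => p * C₁ x y + (1 - p) * C₂ x y

/-- Equality up to a permutation of the output set, `C₁ ≐ C₂`. -/
def PermEq {X Y₁ Y₂ : Type*} (C₁ : X → Y₁ → ℝ) (C₂ : X → Y₂ → ℝ) : Prop :=
  ∃ ψ : Y₁ ≃ Y₂, ∀ x y, C₁ x y = C₂ x (ψ y)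

/-- Cascading `CD` of channels. -/
def cascade {X Y Z : Type*} [Fintype Y] (C : X → Y → ℝ) (D : Y → Z → ℝ) : X → Z → ℝ :=
  fun x z => ∑ y, C x y * D y z

/-- `Refines C₁ C₂` (written `C₁ ⊑ C₂`): there is a channel `D` with `C₁D = C₂`. -/
def Refines {X Y₁ Y₂ : Type*} [Fintype Y₁] [Fintype Y₂] (C₁ : X → Y₁ → ℝ)
    (C₂ : X → Y₂ → ℝ) : Prop :=
  ∃ D : Y₁ → Y₂ → ℝ, IsChannel D ∧ cascade C₁ D = C₂

/-- Equivalence of channels: mutual refinement. -/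
def EquivCh {X Y₁ Y₂ : Type*} [Fintype Y₁] [Fintype Y₂] (C₁ : X → Y₁ → ℝ)
    (C₂ : X → Y₂ → ℝ) : Prop :=
  Refines C₁ C₂ ∧ Refines C₂ C₁

/-- A prior: a probability distribution on the finite input set `X`. -/
def IsPrior {X : Type*} [Fintype X] (π : X → ℝ) : Prop :=
  (∀ x, 0 ≤ π x) ∧ ∑ x, π x = 1

/-- A gain function `g : W × X → [0,1]`. -/
def IsGain {W X : Type*} (g : W → X → ℝ) : Prop :=
  ∀ w x, 0 ≤ g w x ∧ g w x ≤ 1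

/-- Posterior g-vulnerability `V_g[π, C]`. -/
noncomputable def postV {W X Y : Type*} [Fintype W] [Nonempty W] [Fintype X] [Fintype Y]
    (π : X → ℝ) (g : W → X → ℝ) (C : X → Y → ℝ) : ℝ :=
  ∑ y, univ.sup' univ_nonempty fun w => ∑ x, C x y * π x * g w x

/-- The channel `D^⊞` of the paper. -/
def blockDiag {Y₁ Y₂ Z₁ Z₂ : Type*} (D₁ : Y₁ → Z₁ → ℝ) (D₂ : Y₂ → Z₂ → ℝ) :
    Y₁ ⊕ Y₂ → Z₁ ⊕ Z₂ → ℝ :=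
  Sum.elim (fun y => Sum.elim (D₁ y) 0) (fun y => Sum.elim 0 (D₂ y))

section Cascade

variable {X Y Y₁ Y₂ Z Z₁ Z₂ : Type*} [Fintype Y] [Fintype Y₁] [Fintype Y₂]

theorem cascade_const_mul (a : ℝ) (C : X → Y → ℝ) (D : Y → Z → ℝ) :
    cascade (fun x y => a * C x y) D = fun x z => a * cascade C D x z := by
  funext x z
  simp only [cascade, Finset.mul_sum, mul_assoc]

theorem cascade_sumElim_blockDiag (C₁ : X → Y₁ → ℝ) (C₂ : X → Y₂ → ℝ)
    (D₁ : Y₁ → Z₁ → ℝ) (D₂ : Y₂ → Z₂ → ℝ) :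
    cascade (fun x => Sum.elim (C₁ x) (C₂ x)) (blockDiag D₁ D₂)
      = fun x => Sum.elim (cascade C₁ D₁ x) (cascade C₂ D₂ x) := by
  funext x z
  cases z <;> simp [cascade, blockDiag, Fintype.sum_sum_type]

theorem cascade_vis_blockDiag (p : ℝ) (C₁ : X → Y₁ → ℝ) (C₂ : X → Y₂ → ℝ)
    (D₁ : Y₁ → Z₁ → ℝ) (D₂ : Y₂ → Z₂ → ℝ) :
    cascade (vis p C₁ C₂) (blockDiag D₁ D₂) = vis p (cascade C₁ D₁) (cascade C₂ D₂) := by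
  unfold vis
  rw [cascade_sumElim_blockDiag, cascade_const_mul, cascade_const_mul]

end Cascade

theorem cascading_and_visible_choice {X Y₁ Y₂ Z₁ Z₂ : Type*}
    [Fintype Y₁] [Fintype Y₂]
    (C₁ : X → Y₁ → ℝ) (C₂ : X → Y₂ → ℝ)
    (D₁ : Y₁ → Z₁ → ℝ) (D₂ : Y₂ → Z₂ → ℝ)
    (p : ℝ) :
    vis p (cascade C₁ D₁) (cascade C₂ D₂)
      = cascade (vis p C₁ C₂)
          (fun yi zj =>
            match yi, zj with
            | Sum.inl y, Sum.inl z => D₁ y z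
            | Sum.inr y, Sum.inr z => D₂ y z
            | _, _ => 0) := by
  convert (cascade_vis_blockDiag p C₁ C₂ D₁ D₂).symm using 2
  -- the compiled `match` agrees with `blockDiag` only after both arguments are split
  funext yi zj
  rcases yi with y | y <;> rcases zj with z | z <;> rfl
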